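/- arXiv:2507.08444 — 3 statements merged into one kernel-verified Lean document; each statement's English description precedes it below -/
import Mathlib

section
/- For every real z: if |z| ≤ 2 then |sinc z| ≤ 1 − z²/12, and if |z| > 2 then |sinc z| ≤ 1/2. -/
/-- The cardinal sine function: `sinc z = sin z / z` for `z ≠ 0`, `sinc 0 = 1`. -/
noncomputable def sinc (x : ℝ) : ℝ := if x = 0 then 1 else Real.sin x / x

/-!
For `0 ≤ x ≤ 2` write `sin x = 2 sin t cos t` with `t = x / 2 ∈ [0, 1]`. There `sin t ≤ t`,
`cos t ≥ 0`, and the Taylor bound `cos t ≤ 1 - t² / 2 + 5 t⁴ / 96` holds, so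
`sin x ≤ 2t - t³ + 5 t⁵ / 48 ≤ x - x³ / 12`; dividing by `x` and using evenness gives the first
claim. The second is `|sin z| ≤ 1`.
-/

theorem sinc_eq_real_sinc : sinc = Real.sinc := rfl

namespace Real

theorem sin_le_sub_cube_div_twelve {x : ℝ} (hx₀ : 0 ≤ x) (hx₂ : x ≤ 2) :
    sin x ≤ x - x ^ 3 / 12 := by
  set t := x / 2 with ht
  have ht₀ : 0 ≤ t := by positivity
  have ht₁ : t ≤ 1 := by linarith
  have hcos_nonneg : 0 ≤ cos t :=
    cos_nonneg_of_mem_Icc ⟨by linarith [pi_gt_three], by linarith [pi_gt_three]⟩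
  have hcos_le : cos t ≤ 1 - t ^ 2 / 2 + t ^ 4 * (5 / 96) := by
    have := (abs_le.mp (cos_bound (x := t) (by rwa [abs_of_nonneg ht₀]))).2
    rw [abs_of_nonneg ht₀] at this
    linarith
  calc sin x = 2 * sin t * cos t := by rw [← sin_two_mul, ht, mul_div_cancel₀ x two_ne_zero]
    _ ≤ 2 * t * cos t := by gcongr; exact sin_le ht₀
    _ ≤ 2 * t * (1 - t ^ 2 / 2 + t ^ 4 * (5 / 96)) := by gcongr
    _ ≤ x - x ^ 3 / 12 := by
      rw [ht]
      nlinarith [pow_nonneg hx₀ 3, mul_nonneg (pow_nonneg hx₀ 3) (sub_nonneg.mpr hx₂)]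

theorem abs_sinc_le_one_sub_sq_div_twelve {x : ℝ} (hx : |x| ≤ 2) :
    |sinc x| ≤ 1 - x ^ 2 / 12 := by
  wlog hx₀ : 0 ≤ x generalizing x
  · simpa using this (x := -x) (by rwa [abs_neg]) (by linarith)
  rcases hx₀.eq_or_lt with rfl | hx_pos
  · simp
  rw [abs_of_nonneg hx₀] at hx
  have hsin_nonneg : 0 ≤ sin x := sin_nonneg_of_nonneg_of_le_pi hx₀ (by linarith [pi_gt_three])
  rw [sinc_of_ne_zero hx_pos.ne', abs_of_nonneg (div_nonneg hsin_nonneg hx₀), div_le_iff₀ hx_pos]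
  linarith [sin_le_sub_cube_div_twelve hx₀ hx]

theorem abs_sinc_le_inv_abs {x : ℝ} (hx : x ≠ 0) : |sinc x| ≤ |x|⁻¹ := by
  rw [sinc_of_ne_zero hx, abs_div, div_eq_mul_inv]
  exact mul_le_of_le_one_left (by positivity) (abs_sin_le_one x)

end Real

theorem stmt_7 (z : ℝ) :
    (|z| ≤ 2 → |sinc z| ≤ 1 - z ^ 2 / 12) ∧ (|z| > 2 → |sinc z| ≤ 1 / 2) := by
  rw [sinc_eq_real_sinc]
  refine ⟨Real.abs_sinc_le_one_sub_sq_div_twelve, fun hz => ?_⟩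
  have hz₀ : z ≠ 0 := by rintro rfl; norm_num at hz
  calc |Real.sinc z| ≤ |z|⁻¹ := Real.abs_sinc_le_inv_abs hz₀
    _ ≤ 1 / 2 := by rw [one_div]; exact inv_anti₀ two_pos hz.le
end

section
/- Let d ≥ 1 be an integer. For all indices i₁, i₂, i₃, i₄ ∈ {1, …, d} (repetitions allowed) and every u ∈ ℝ^d, the fourth-order partial derivative of Ψ₁ satisfies |(∂_{i₁}∂_{i₂}∂_{i₃}∂_{i₄} Ψ₁)(u)| ≤ 1/16, where Ψ₁(u) = ∏_{i=1}^{d} sinc(u_i/4)⁴. -/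
/-- The sinc-4 kernel (bandwidth one) on `ℝ^d`. -/
noncomputable def Psi1 (d : ℕ) (u : EuclideanSpace ℝ (Fin d)) : ℝ :=
  ∏ i, sinc (u i / 4) ^ 4

open scoped Real ContDiff

noncomputable def sincSqDeriv (k : ℕ) (y : ℝ) : ℝ :=
  ∫ t in (0 : ℝ)..2, (1 - t / 2) * t ^ k * Real.cos (t * y + k * (π / 2))

lemma abs_triangle_mul_pow_le {t : ℝ} (ht : t ∈ Set.Icc (0 : ℝ) 2) (k : ℕ) :
    |(1 - t / 2) * t ^ k| ≤ 2 ^ k := by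
  obtain ⟨h0, h2⟩ := ht
  rw [abs_of_nonneg (by positivity [show 0 ≤ 1 - t / 2 by linarith])]
  calc (1 - t / 2) * t ^ k ≤ 1 * 2 ^ k := by gcongr; linarith
    _ = 2 ^ k := one_mul _

lemma hasDerivAt_sincSqDeriv (k : ℕ) (y : ℝ) :
    HasDerivAt (sincSqDeriv k) (sincSqDeriv (k + 1) y) y := by
  have hF' : ∀ t x : ℝ, HasDerivAt (fun x => (1 - t / 2) * t ^ k * Real.cos (t * x + k * (π / 2)))
      ((1 - t / 2) * t ^ (k + 1) * Real.cos (t * x + ↑(k + 1) * (π / 2))) x := by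
    intro t x
    have h := (((hasDerivAt_id x).const_mul t).add_const (k * (π / 2))).cos.const_mul
      ((1 - t / 2) * t ^ k)
    simp only [id] at h
    refine h.congr_deriv ?_
    rw [Nat.cast_succ, add_one_mul, ← add_assoc, Real.cos_add_pi_div_two]
    ring
  refine (intervalIntegral.hasDerivAt_integral_of_dominated_loc_of_deriv_le
    (bound := fun _ => 2 ^ (k + 1)) (Metric.ball_mem_nhds y one_pos)
    (.of_forall fun x => (Continuous.aestronglyMeasurable (by fun_prop)).restrict)
    (Continuous.intervalIntegrable (by fun_prop) _ _)
    (Continuous.aestronglyMeasurable (by fun_prop)).restrict ?_ intervalIntegrable_const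
    (.of_forall fun t _ x _ => hF' t x)).2
  refine .of_forall fun t ht x _ => ?_
  rw [Set.uIoc_of_le zero_le_two] at ht
  rw [Real.norm_eq_abs, abs_mul]
  calc |(1 - t / 2) * t ^ (k + 1)| * |Real.cos (t * x + ↑(k + 1) * (π / 2))| ≤ 2 ^ (k + 1) * 1 :=
        mul_le_mul (abs_triangle_mul_pow_le (Set.Ioc_subset_Icc_self ht) _)
          (Real.abs_cos_le_one _) (abs_nonneg _) (by positivity)
    _ = 2 ^ (k + 1) := mul_one _

lemma integral_triangle_mul_pow (k : ℕ) :
    ∫ t in (0 : ℝ)..2, (1 - t / 2) * t ^ k = 2 ^ (k + 1) / ((k + 1) * (k + 2)) := by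
  have hsplit : (fun t : ℝ => (1 - t / 2) * t ^ k) = fun t => t ^ k - t ^ (k + 1) / 2 := by
    funext t; ring
  rw [hsplit, intervalIntegral.integral_sub (Continuous.intervalIntegrable (by fun_prop) _ _)
    (Continuous.intervalIntegrable (by fun_prop) _ _), intervalIntegral.integral_div,
    integral_pow, integral_pow]
  field_simp
  push_cast
  ring

lemma abs_sincSqDeriv_le (k : ℕ) (y : ℝ) :
    |sincSqDeriv k y| ≤ 2 ^ (k + 1) / ((k + 1) * (k + 2)) := by
  rw [← integral_triangle_mul_pow, ← Real.norm_eq_abs]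
  refine intervalIntegral.norm_integral_le_of_norm_le zero_le_two (.of_forall fun t ht => ?_)
    (Continuous.intervalIntegrable (by fun_prop) _ _)
  have hw : 0 ≤ (1 - t / 2) * t ^ k := by
    have := ht.1.le; nlinarith [pow_nonneg this k, ht.2]
  rw [Real.norm_eq_abs, abs_mul, abs_of_nonneg hw]
  exact mul_le_of_le_one_right hw (Real.abs_cos_le_one _)

lemma iteratedDeriv_sincSqDeriv (k n : ℕ) :
    iteratedDeriv n (sincSqDeriv k) = sincSqDeriv (k + n) := by
  induction n with
  | zero => simp
  | succ n ih =>
    rw [iteratedDeriv_succ, ih]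
    exact funext fun y => (hasDerivAt_sincSqDeriv _ y).deriv

lemma contDiff_sincSqDeriv (k : ℕ) : ContDiff ℝ ∞ (sincSqDeriv k) :=
  contDiff_of_differentiable_iteratedDeriv fun n _ => by
    rw [iteratedDeriv_sincSqDeriv]
    exact fun y => (hasDerivAt_sincSqDeriv _ y).differentiableAt

lemma sinc_sq_eq_sincSqDeriv_zero (y : ℝ) : sinc y ^ 2 = sincSqDeriv 0 y := by
  rcases eq_or_ne y 0 with rfl | hy
  · norm_num [sinc, sincSqDeriv]
  have hG : ∀ t ∈ Set.uIcc (0 : ℝ) 2, HasDerivAt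
      (fun t => (1 - t / 2) * Real.sin (t * y) / y - Real.cos (t * y) / (2 * y ^ 2))
      ((1 - t / 2) * t ^ 0 * Real.cos (t * y + (0 : ℕ) * (π / 2))) t := by
    intro t _
    have hty : HasDerivAt (fun t : ℝ => t * y) y t := by simpa using (hasDerivAt_id t).mul_const y
    have h := ((((hasDerivAt_id t).div_const 2).const_sub 1).mul hty.sin).div_const y |>.sub
      (hty.cos.div_const (2 * y ^ 2))
    refine h.congr_deriv ?_
    simp only [id, pow_zero, mul_one, Nat.cast_zero, zero_mul, add_zero]
    field_simp
    ring
  rw [sincSqDeriv, intervalIntegral.integral_eq_sub_of_hasDerivAt hG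
    (Continuous.intervalIntegrable (by fun_prop) _ _), sinc, if_neg hy]
  simp only [zero_mul, zero_div, sub_zero, Real.sin_zero, Real.cos_zero]
  rw [show (2 : ℝ) * y = y + y by ring, Real.cos_add]
  field_simp
  linear_combination Real.sin_sq_add_cos_sq y

noncomputable def sincQuartic (x : ℝ) : ℝ := sinc (x / 4) ^ 4

lemma sincQuartic_eq_mul_self :
    sincQuartic = (fun x => sincSqDeriv 0 (4⁻¹ * x)) * fun x => sincSqDeriv 0 (4⁻¹ * x) := by
  funext x
  rw [Pi.mul_apply, ← sinc_sq_eq_sincSqDeriv_zero, sincQuartic, inv_mul_eq_div]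
  ring

lemma iteratedDeriv_sincSqDeriv_zero_comp (j : ℕ) (x : ℝ) :
    iteratedDeriv j (fun x => sincSqDeriv 0 (4⁻¹ * x)) x = 4⁻¹ ^ j * sincSqDeriv j (4⁻¹ * x) := by
  rw [iteratedDeriv_comp_const_mul ((contDiff_sincSqDeriv 0).of_le (mod_cast le_top)),
    iteratedDeriv_sincSqDeriv, zero_add]

lemma contDiff_sincSqDeriv_zero_comp : ContDiff ℝ ∞ fun x => sincSqDeriv 0 (4⁻¹ * x) :=
  (contDiff_sincSqDeriv 0).comp (contDiff_const.mul contDiff_id)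

lemma contDiff_sincQuartic : ContDiff ℝ ∞ sincQuartic := by
  rw [sincQuartic_eq_mul_self]
  exact contDiff_sincSqDeriv_zero_comp.mul contDiff_sincSqDeriv_zero_comp

lemma abs_iteratedDeriv_sincQuartic_le {k : ℕ} (hk : k ≤ 4) (x : ℝ) :
    |iteratedDeriv k sincQuartic x| ≤ (1 / 2) ^ k := by
  set b : ℕ → ℝ := fun j => 4⁻¹ ^ j * (2 ^ (j + 1) / ((j + 1) * (j + 2)))
  have hb : ∀ j, |iteratedDeriv j (fun x => sincSqDeriv 0 (4⁻¹ * x)) x| ≤ b j := fun j => by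
    rw [iteratedDeriv_sincSqDeriv_zero_comp, abs_mul, abs_of_pos (by positivity)]
    exact mul_le_mul_of_nonneg_left (abs_sincSqDeriv_le _ _) (by positivity)
  have hg : ContDiffAt ℝ k (fun x => sincSqDeriv 0 (4⁻¹ * x)) x :=
    (contDiff_sincSqDeriv_zero_comp.of_le (mod_cast le_top)).contDiffAt
  rw [sincQuartic_eq_mul_self, iteratedDeriv_mul (x := x) hg hg]
  calc _ ≤ ∑ i ∈ Finset.range (k + 1), k.choose i * b i * b (k - i) := by
        refine (Finset.abs_sum_le_sum_abs _ _).trans (Finset.sum_le_sum fun i _ => ?_)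
        rw [abs_mul, abs_mul, Nat.abs_cast]
        gcongr
        exacts [hb i, hb _]
    _ ≤ (1 / 2) ^ k := by
        interval_cases k <;> norm_num [b, Finset.sum_range_succ, Nat.choose]

section ProdCoord

variable {ι : Type*} [Fintype ι]

noncomputable def prodIteratedDeriv (f : ι → ℝ → ℝ) (m : ι → ℕ) (u : EuclideanSpace ℝ ι) : ℝ :=
  ∏ i, iteratedDeriv (m i) (f i) (u i)

lemma contDiff_prodIteratedDeriv {f : ι → ℝ → ℝ} (hf : ∀ i, ContDiff ℝ ∞ (f i)) (m : ι → ℕ) :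
    ContDiff ℝ ∞ (prodIteratedDeriv f m) :=
  contDiff_prod fun i _ => by
    rw [iteratedDeriv_eq_iterate]
    exact ((hf i).iterate_deriv (m i)).comp (EuclideanSpace.proj (𝕜 := ℝ) i).contDiff

variable [DecidableEq ι]

lemma fderiv_prod_apply_single {g : ι → ℝ → ℝ} (hg : ∀ i, Differentiable ℝ (g i))
    (u : EuclideanSpace ℝ ι) (j : ι) :
    fderiv ℝ (fun u : EuclideanSpace ℝ ι => ∏ i, g i (u i)) u (EuclideanSpace.single j 1) =
      deriv (g j) (u j) * ∏ i ∈ Finset.univ.erase j, g i (u i) := by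
  have hcoord : ∀ i, HasFDerivAt (fun u : EuclideanSpace ℝ ι => g i (u i))
      (deriv (g i) (u i) • EuclideanSpace.proj i) u := fun i =>
    (hg i (u i)).hasDerivAt.comp_hasFDerivAt u (EuclideanSpace.proj (𝕜 := ℝ) i).hasFDerivAt
  rw [(HasFDerivAt.finsetProd fun i _ => hcoord i).fderiv, _root_.sum_apply,
    Finset.sum_eq_single j]
  · simp [mul_comm]
  · intro i _ hij
    simp [hij]
  · simp

variable {f : ι → ℝ → ℝ}

lemma fderiv_prodIteratedDeriv_apply_single (hf : ∀ i, ContDiff ℝ ∞ (f i)) (m : ι → ℕ) (j : ι)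
    (u : EuclideanSpace ℝ ι) :
    fderiv ℝ (prodIteratedDeriv f m) u (EuclideanSpace.single j 1) =
      prodIteratedDeriv f (m + Pi.single j 1) u := by
  have hg : ∀ i, Differentiable ℝ (iteratedDeriv (m i) (f i)) := fun i =>
    (hf i).differentiable_iteratedDeriv _ (mod_cast WithTop.coe_lt_top _)
  unfold prodIteratedDeriv
  rw [fderiv_prod_apply_single hg, ← iteratedDeriv_succ,
    ← Finset.mul_prod_erase _ _ (Finset.mem_univ j)]
  congr 1
  · simp
  · refine Finset.prod_congr rfl fun i hi => ?_
    simp [Finset.ne_of_mem_erase hi]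

theorem iteratedFDeriv_prodIteratedDeriv_apply_single (hf : ∀ i, ContDiff ℝ ∞ (f i)) (n : ℕ)
    (m : ι → ℕ) (j : Fin n → ι) (u : EuclideanSpace ℝ ι) :
    iteratedFDeriv ℝ n (prodIteratedDeriv f m) u (fun a => EuclideanSpace.single (j a) 1) =
      prodIteratedDeriv f (m + ∑ a, Pi.single (j a) 1) u := by
  induction n generalizing m with
  | zero => simp
  | succ n ih =>
    have hc : ContDiff ℝ n (fderiv ℝ (prodIteratedDeriv f m)) :=
      (contDiff_prodIteratedDeriv hf m).fderiv_right (mod_cast le_top)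
    rw [iteratedFDeriv_succ_apply_right, ← iteratedFDeriv_clm_apply_const_apply hc le_rfl]
    simp only [fderiv_prodIteratedDeriv_apply_single hf]
    rw [Fin.init_def, ih, Fin.sum_univ_castSucc]
    congr 1
    abel

end ProdCoord

section ProdCoordBound

variable {ι : Type*} [DecidableEq ι]

lemma sum_pi_single_one_apply_le {n : ℕ} (j : Fin n → ι) (i : ι) :
    (∑ a, Pi.single (j a) 1 : ι → ℕ) i ≤ n := by
  rw [Finset.sum_apply]
  calc ∑ a, (Pi.single (j a) 1 : ι → ℕ) i ≤ ∑ _a : Fin n, 1 :=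
        Finset.sum_le_sum fun a _ => by rw [Pi.single_apply]; split_ifs <;> simp
    _ = n := by simp

variable [Fintype ι]

lemma sum_sum_pi_single_one {n : ℕ} (j : Fin n → ι) :
    ∑ i, (∑ a, Pi.single (j a) 1 : ι → ℕ) i = n := by
  simp_rw [Finset.sum_apply]
  rw [Finset.sum_comm]
  simp

theorem abs_iteratedFDeriv_prod_apply_single_le {f : ℝ → ℝ} (hf : ContDiff ℝ ∞ f) {n : ℕ}
    {r : ℝ} (hbound : ∀ k ≤ n, ∀ x, |iteratedDeriv k f x| ≤ r ^ k) (j : Fin n → ι)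
    (u : EuclideanSpace ℝ ι) :
    |iteratedFDeriv ℝ n (fun u : EuclideanSpace ℝ ι => ∏ i, f (u i)) u
      (fun a => EuclideanSpace.single (j a) 1)| ≤ r ^ n := by
  have hprod :
      (fun u : EuclideanSpace ℝ ι => ∏ i, f (u i)) = prodIteratedDeriv (fun _ => f) 0 := by
    funext u
    simp only [prodIteratedDeriv, Pi.zero_apply, iteratedDeriv_zero]
  rw [hprod, iteratedFDeriv_prodIteratedDeriv_apply_single (fun _ => hf), zero_add,
    prodIteratedDeriv, Finset.abs_prod]
  calc _ ≤ ∏ i, r ^ (∑ a, Pi.single (j a) 1 : ι → ℕ) i :=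
        Finset.prod_le_prod (fun i _ => abs_nonneg _)
          fun i _ => hbound _ (sum_pi_single_one_apply_le j i) _
    _ = r ^ n := by rw [Finset.prod_pow_eq_pow_sum, sum_sum_pi_single_one]

end ProdCoordBound

theorem stmt_9_general (d : ℕ) (i₁ i₂ i₃ i₄ : Fin d) (u : EuclideanSpace ℝ (Fin d)) :
    |iteratedFDeriv ℝ 4 (Psi1 d) u
        ![EuclideanSpace.single i₁ (1 : ℝ), EuclideanSpace.single i₂ (1 : ℝ),
          EuclideanSpace.single i₃ (1 : ℝ), EuclideanSpace.single i₄ (1 : ℝ)]| ≤ 1 / 16 := by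
  have hvec : ![EuclideanSpace.single i₁ (1 : ℝ), EuclideanSpace.single i₂ 1,
      EuclideanSpace.single i₃ 1, EuclideanSpace.single i₄ 1] =
      fun a => EuclideanSpace.single (![i₁, i₂, i₃, i₄] a) 1 := by
    funext a; fin_cases a <;> rfl
  have h := abs_iteratedFDeriv_prod_apply_single_le contDiff_sincQuartic
    (fun k hk x => abs_iteratedDeriv_sincQuartic_le hk x) ![i₁, i₂, i₃, i₄] u
  have hPsi : Psi1 d = fun u : EuclideanSpace ℝ (Fin d) => ∏ i, sincQuartic (u i) := rfl
  rw [hPsi, hvec]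
  calc _ ≤ (1 / 2) ^ 4 := h
    _ = 1 / 16 := by norm_num

theorem stmt_9 (d : ℕ) (hd : 1 ≤ d) (i₁ i₂ i₃ i₄ : Fin d) (u : EuclideanSpace ℝ (Fin d)) :
    |iteratedFDeriv ℝ 4 (Psi1 d) u
        ![EuclideanSpace.single i₁ (1 : ℝ), EuclideanSpace.single i₂ (1 : ℝ),
          EuclideanSpace.single i₃ (1 : ℝ), EuclideanSpace.single i₄ (1 : ℝ)]| ≤ 1 / 16 :=
  stmt_9_general d i₁ i₂ i₃ i₄ u
end

section
/- For every integer n ≥ 1 and every x ∈ ℝ, the n-th derivative of sinc satisfies |sinc⁽ⁿ⁾(x)| ≤ 1/2. -/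
open Real hiding sinc
open intervalIntegral

/-- The `n`-th `x`-derivative of `∫₀¹ cos (x t) dt` taken under the integral sign, using
`cos⁽ⁿ⁾ θ = cos (θ + n π/2)`. -/
noncomputable def sincDeriv (n : ℕ) (x : ℝ) : ℝ :=
  ∫ t in (0 : ℝ)..1, t ^ n * cos (x * t + n * (π / 2))

lemma sinc_eq_integral_cos (x : ℝ) : sinc x = ∫ t in (0 : ℝ)..1, cos (x * t) := by
  rcases eq_or_ne x 0 with rfl | hx
  · simp [sinc]
  · rw [sinc, if_neg hx, integral_comp_mul_left (fun u => cos u) hx]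
    simp [div_eq_inv_mul]

lemma sincDeriv_zero : sincDeriv 0 = sinc := by
  funext x
  simp [sincDeriv, sinc_eq_integral_cos]

lemma abs_pow_mul_cos_le (n : ℕ) (t θ : ℝ) : |t ^ n * cos θ| ≤ |t| ^ n := by
  rw [abs_mul, abs_pow]
  exact mul_le_of_le_one_right (by positivity) (abs_cos_le_one θ)

lemma hasDerivAt_pow_mul_cos_phase (n : ℕ) (t y : ℝ) :
    HasDerivAt (fun x => t ^ n * cos (x * t + n * (π / 2)))
      (t ^ (n + 1) * cos (y * t + ↑(n + 1) * (π / 2))) y := by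
  have hphase : cos (y * t + ↑(n + 1) * (π / 2)) = -sin (y * t + n * (π / 2)) := by
    rw [Nat.cast_succ, add_one_mul, ← add_assoc, cos_add_pi_div_two]
  have hinner : HasDerivAt (fun x => x * t + n * (π / 2)) t y := by
    simpa using (hasDerivAt_mul_const t).add_const (n * (π / 2))
  refine (((hasDerivAt_cos _).comp y hinner).const_mul (t ^ n)).congr_deriv ?_
  rw [hphase]
  ring

lemma hasDerivAt_sincDeriv (n : ℕ) (x : ℝ) :
    HasDerivAt (sincDeriv n) (sincDeriv (n + 1) x) x :=
  (hasDerivAt_integral_of_dominated_loc_of_deriv_le (bound := fun t => |t| ^ (n + 1))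
    Filter.univ_mem (.of_forall fun _ => by fun_prop)
    (Continuous.intervalIntegrable (by fun_prop) _ _) (by fun_prop)
    (.of_forall fun t _ y _ => abs_pow_mul_cos_le (n + 1) t _)
    (Continuous.intervalIntegrable (by fun_prop) _ _)
    (.of_forall fun t _ y _ => hasDerivAt_pow_mul_cos_phase n t y)).2

lemma iteratedDeriv_sinc (n : ℕ) : iteratedDeriv n sinc = sincDeriv n := by
  induction n with
  | zero => rw [iteratedDeriv_zero, sincDeriv_zero]
  | succ n ih =>
    funext x
    rw [iteratedDeriv_succ, ih, (hasDerivAt_sincDeriv n x).deriv]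

lemma abs_sincDeriv_le (n : ℕ) (x : ℝ) : |sincDeriv n x| ≤ 1 / (n + 1) := by
  calc |sincDeriv n x|
      ≤ ∫ t in (0 : ℝ)..1, |t ^ n * cos (x * t + n * (π / 2))| :=
        abs_integral_le_integral_abs zero_le_one
    _ ≤ ∫ t in (0 : ℝ)..1, t ^ n := by
        refine integral_mono_on zero_le_one (Continuous.intervalIntegrable (by fun_prop) _ _)
          (Continuous.intervalIntegrable (by fun_prop) _ _) fun t ht => ?_
        simpa [abs_of_nonneg ht.1] using abs_pow_mul_cos_le n t (x * t + n * (π / 2))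
    _ = 1 / (n + 1) := by simp [integral_pow]

lemma abs_iteratedDeriv_sinc_le (n : ℕ) (x : ℝ) : |iteratedDeriv n sinc x| ≤ 1 / (n + 1) := by
  rw [iteratedDeriv_sinc]
  exact abs_sincDeriv_le n x

theorem stmt_11 (n : ℕ) (hn : 1 ≤ n) (x : ℝ) :
    |iteratedDeriv n sinc x| ≤ 1 / 2 := by
  refine (abs_iteratedDeriv_sinc_le n x).trans (one_div_le_one_div_of_le two_pos ?_)
  have hn_real : (1 : ℝ) ≤ n := mod_cast hn
  linarith
end
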